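/- Let α, γ > 0, β ∈ ℝ, Q = β/√(αγ) with Q > 1, and A(z) = α z₁⁴ + 2β z₁² z₂² + γ z₂⁴. Then for all ξ, η ∈ ℝ²: Re A(ξ+iη) + (Q²-1)A(η) = 2(Q-3)(√α ξ₁η₁ - √γ ξ₂η₂)² + [√α(ξ₁² - Qη₁²) + √γ(ξ₂² - Qη₂²)]² + 2(Q-1)√(αγ)(ξ₁ξ₂ - ((Q+3)/(Q-1))η₁η₂)² + 2((Q-3)(Q+1)(Q²+3)/(Q-1))√(αγ) η₁²η₂². -/

import Mathlib

/-!
Write `α = a²`, `γ = c²` with `a, c > 0`; then `√(αγ) = ac` and `β = Q a c`, so after clearing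
the denominator `Q - 1` both sides are polynomials in `a, c, Q, ξ, η` and agree by expansion.
-/

open Complex

theorem re_quartic_form_complex (α β γ ξ1 ξ2 η1 η2 : ℝ) :
    ((α : ℂ) * (ξ1 + η1 * I) ^ 4 + 2 * β * (ξ1 + η1 * I) ^ 2 * (ξ2 + η2 * I) ^ 2
        + γ * (ξ2 + η2 * I) ^ 4).re
      = α * (ξ1 ^ 4 - 6 * ξ1 ^ 2 * η1 ^ 2 + η1 ^ 4)
        + 2 * β * (ξ1 ^ 2 * ξ2 ^ 2 - ξ1 ^ 2 * η2 ^ 2 - ξ2 ^ 2 * η1 ^ 2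
            - 4 * ξ1 * ξ2 * η1 * η2 + η1 ^ 2 * η2 ^ 2)
        + γ * (ξ2 ^ 4 - 6 * ξ2 ^ 2 * η2 ^ 2 + η2 ^ 4) := by
  simp only [add_re, mul_re, mul_im, ofReal_re, ofReal_im, I_re, I_im, add_im,
    re_ofNat, im_ofNat, pow_succ, pow_zero, one_mul]
  ring

theorem quartic_form_sum_of_squares (a c Q ξ1 ξ2 η1 η2 : ℝ) (hQ : Q ≠ 1) :
    a ^ 2 * (ξ1 ^ 4 - 6 * ξ1 ^ 2 * η1 ^ 2 + η1 ^ 4)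
        + 2 * (Q * (a * c)) * (ξ1 ^ 2 * ξ2 ^ 2 - ξ1 ^ 2 * η2 ^ 2 - ξ2 ^ 2 * η1 ^ 2
            - 4 * ξ1 * ξ2 * η1 * η2 + η1 ^ 2 * η2 ^ 2)
        + c ^ 2 * (ξ2 ^ 4 - 6 * ξ2 ^ 2 * η2 ^ 2 + η2 ^ 4)
      + (Q ^ 2 - 1) * (a ^ 2 * η1 ^ 4 + 2 * (Q * (a * c)) * η1 ^ 2 * η2 ^ 2 + c ^ 2 * η2 ^ 4)
    = 2 * (Q - 3) * (a * ξ1 * η1 - c * ξ2 * η2) ^ 2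
      + (a * (ξ1 ^ 2 - Q * η1 ^ 2) + c * (ξ2 ^ 2 - Q * η2 ^ 2)) ^ 2
      + 2 * (Q - 1) * (a * c) * (ξ1 * ξ2 - (Q + 3) / (Q - 1) * η1 * η2) ^ 2
      + 2 * ((Q - 3) * (Q + 1) * (Q ^ 2 + 3) / (Q - 1)) * (a * c) * η1 ^ 2 * η2 ^ 2 := by
  have hQ1 : Q - 1 ≠ 0 := sub_ne_zero.mpr hQ
  field_simp
  ring

/-- identity (relation3) in the regime `Q > 1`. -/
theorem stmt5 (α β γ : ℝ) (hα : 0 < α) (hγ : 0 < γ)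
    (Q : ℝ) (hQdef : Q = β / Real.sqrt (α * γ)) (hQ : 1 < Q)
    (ξ1 ξ2 η1 η2 : ℝ) :
    ((α : ℂ) * (ξ1 + η1 * I) ^ 4 + 2 * β * (ξ1 + η1 * I) ^ 2 * (ξ2 + η2 * I) ^ 2
        + γ * (ξ2 + η2 * I) ^ 4).re
      + (Q ^ 2 - 1) * (α * η1 ^ 4 + 2 * β * η1 ^ 2 * η2 ^ 2 + γ * η2 ^ 4)
    = 2 * (Q - 3) * (Real.sqrt α * ξ1 * η1 - Real.sqrt γ * ξ2 * η2) ^ 2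
      + (Real.sqrt α * (ξ1 ^ 2 - Q * η1 ^ 2) + Real.sqrt γ * (ξ2 ^ 2 - Q * η2 ^ 2)) ^ 2
      + 2 * (Q - 1) * Real.sqrt (α * γ)
          * (ξ1 * ξ2 - (Q + 3) / (Q - 1) * η1 * η2) ^ 2
      + 2 * ((Q - 3) * (Q + 1) * (Q ^ 2 + 3) / (Q - 1)) * Real.sqrt (α * γ)
          * η1 ^ 2 * η2 ^ 2 := by
  obtain ⟨a, ha, rfl⟩ : ∃ a, 0 < a ∧ α = a ^ 2 :=
    ⟨Real.sqrt α, Real.sqrt_pos.mpr hα, (Real.sq_sqrt hα.le).symm⟩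
  obtain ⟨c, hc, rfl⟩ : ∃ c, 0 < c ∧ γ = c ^ 2 :=
    ⟨Real.sqrt γ, Real.sqrt_pos.mpr hγ, (Real.sq_sqrt hγ.le).symm⟩
  have hsqrt : Real.sqrt (a ^ 2 * c ^ 2) = a * c := by
    rw [← mul_pow, Real.sqrt_sq (mul_pos ha hc).le]
  have hβ : β = Q * (a * c) := by
    rw [hQdef, hsqrt, div_mul_cancel₀ _ (mul_pos ha hc).ne']
  rw [re_quartic_form_complex, hsqrt, hβ, Real.sqrt_sq ha.le, Real.sqrt_sq hc.le]
  exact quartic_form_sum_of_squares a c Q ξ1 ξ2 η1 η2 hQ.ne'
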